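/- In LJF, the sequent ↓(∀x. ↑(↓A⁻ ⊗ ↓B⁻(x))) ⊢ ↑(↓A⁻ ⊗ ↓∀u. B⁻(u)) is not derivable. -/

import Mathlib

set_option autoImplicit true

mutual
/-- Negative formulas of focused polarised intuitionistic linear logic LJF,
over term domain `ℕ`; atoms are `natom p args` for predicate symbol `p`. -/
inductive NegF : Type
  | natom : ℕ → List ℕ → NegF
  | lolli : PosF → NegF → NegF
  | all : (ℕ → NegF) → NegF
  | up : PosF → NegF
/-- Positive formulas of LJF. -/
inductive PosF : Type
  | patom : ℕ → List ℕ → PosF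
  | tensor : PosF → PosF → PosF
  | bang : NegF → PosF
  | ex : (ℕ → PosF) → PosF
  | down : NegF → PosF
end

/-- The three judgment forms of LJF: inversion `Γ; Δ ⊢ N`,
left focus `Γ; Δ, [N] ⊢ N'` and right focus `Γ; Δ ⊢ [P]`. -/
inductive LFoc : Type
  | inv : NegF → LFoc
  | left : NegF → NegF → LFoc
  | right : PosF → LFoc

/-- Derivability in LJF (Liang–Miller rules): `LJF Γ Δ J`, with
unrestricted context `Γ` of negative formulas and linear context `Δ`
of positive formulas. -/
inductive LJF : List NegF → Multiset PosF → LFoc → Prop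
  | axNeg : LJF Γ 0 (.left (.natom p ts) (.natom p ts))
  | axPos : LJF Γ {.patom p ts} (.right (.patom p ts))
  | allL : LJF Γ Δ (.left (N t) C) → LJF Γ Δ (.left (.all N) C)
  | allR : (∀ t, LJF Γ Δ (.inv (N t))) → LJF Γ Δ (.inv (.all N))
  | exL : (∀ t, LJF Γ (P t ::ₘ Δ) (.inv C)) → LJF Γ (PosF.ex P ::ₘ Δ) (.inv C)
  | exR : LJF Γ Δ (.right (P t)) → LJF Γ Δ (.right (.ex P))
  | lolliL : LJF Γ Δ₁ (.right P) → LJF Γ Δ₂ (.left N C) →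
      LJF Γ (Δ₁ + Δ₂) (.left (.lolli P N) C)
  | lolliR : LJF Γ (P ::ₘ Δ) (.inv N) → LJF Γ Δ (.inv (.lolli P N))
  | tensorL : LJF Γ (P₁ ::ₘ P₂ ::ₘ Δ) (.inv C) →
      LJF Γ (PosF.tensor P₁ P₂ ::ₘ Δ) (.inv C)
  | tensorR : LJF Γ Δ₁ (.right P₁) → LJF Γ Δ₂ (.right P₂) →
      LJF Γ (Δ₁ + Δ₂) (.right (.tensor P₁ P₂))
  | bangL : LJF (N :: Γ) Δ (.inv C) → LJF Γ (PosF.bang N ::ₘ Δ) (.inv C)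
  | bangR : LJF Γ 0 (.inv N) → LJF Γ 0 (.right (.bang N))
  | copy : N ∈ Γ → LJF Γ Δ (.left N C) → LJF Γ Δ (.inv C)
  | focusL : LJF Γ Δ (.left N C) → LJF Γ (PosF.down N ::ₘ Δ) (.inv C)
  | focusR : LJF Γ Δ (.right P) → LJF Γ Δ (.inv (.up P))
  | blurL : LJF Γ (P ::ₘ Δ) (.inv C) → LJF Γ Δ (.left (.up P) C)
  | blurR : LJF Γ Δ (.inv N) → LJF Γ Δ (.right (.down N))

open scoped Pointwise

/-!
Interpret formulas in a resource semantics: a formula denotes a set of elements of a commutative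
monoid, `⊗` is pointwise addition, `⊸` its residual, `∀`/`∃` are intersection/union, and a
sequent is valid when every realizer of its linear context realizes its conclusion. LJF is sound
for every such model. In `ℕ∞` with `A⁻` denoting everything and `B⁻(t)` denoting `{t}`, the
conclusion `A⁻ ⊗ ∀u. B⁻(u)` has no realizer since `⋂ u, {u} = ∅`, whereas the absorbing element
`⊤ = ⊤ + t` realizes `∀x. A⁻ ⊗ B⁻(x)`.
-/

structure AtomInterp (M : Type*) where
  neg : ℕ → List ℕ → Set M
  pos : ℕ → List ℕ → Set M

namespace AtomInterp

variable {M : Type*} [AddCommMonoid M] (v : AtomInterp M)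

mutual
def semN : NegF → Set M
  | .natom p ts => v.neg p ts
  | .lolli P N => {S | ∀ T ∈ semP P, S + T ∈ semN N}
  | .all N => ⋂ t, semN (N t)
  | .up P => semP P
def semP : PosF → Set M
  | .patom p ts => v.pos p ts
  | .tensor P Q => semP P + semP Q
  | .bang N => {S | S = 0 ∧ 0 ∈ semN N}
  | .ex P => ⋃ t, semP (P t)
  | .down N => semN N
end

def semCtx (Δ : Multiset PosF) : Set M := (Δ.map v.semP).sum

@[simp] theorem semCtx_zero : v.semCtx 0 = 0 := rfl

@[simp] theorem semCtx_singleton (P : PosF) : v.semCtx {P} = v.semP P := by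
  simp [semCtx]

@[simp] theorem semCtx_cons (P : PosF) (Δ : Multiset PosF) :
    v.semCtx (P ::ₘ Δ) = v.semP P + v.semCtx Δ := by
  simp [semCtx]

@[simp] theorem semCtx_add (Δ₁ Δ₂ : Multiset PosF) :
    v.semCtx (Δ₁ + Δ₂) = v.semCtx Δ₁ + v.semCtx Δ₂ := by
  simp [semCtx]

def semJ (R : Set M) : LFoc → Prop
  | .inv N => R ⊆ v.semN N
  | .left N C => R + v.semN N ⊆ v.semN C
  | .right P => R ⊆ v.semP P

theorem subset_semN_lolli_iff {R : Set M} {P : PosF} {N : NegF} :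
    R ⊆ v.semN (.lolli P N) ↔ R + v.semP P ⊆ v.semN N := by
  rw [Set.add_subset_iff]; rfl

theorem semN_lolli_add_subset (P : PosF) (N : NegF) :
    v.semN (.lolli P N) + v.semP P ⊆ v.semN N :=
  v.subset_semN_lolli_iff.1 subset_rfl

theorem semJ_of_ljf {Γ : List NegF} {Δ : Multiset PosF} {J : LFoc} (h : LJF Γ Δ J) :
    (∀ G ∈ Γ, 0 ∈ v.semN G) → v.semJ (v.semCtx Δ) J := by
  induction h with
  | axNeg => intro; simp [semJ]
  | axPos => intro; simp [semJ, semP]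
  | allL _ ih =>
    exact fun hΓ => (Set.add_subset_add_left (Set.iInter_subset _ _)).trans (ih hΓ)
  | allR _ ih => exact fun hΓ => Set.subset_iInter fun t => ih t hΓ
  | exL _ ih =>
    intro hΓ
    simpa [semJ, semP, Set.iUnion_add] using fun t => ih t hΓ
  | exR _ ih => exact fun hΓ => (ih hΓ).trans (Set.subset_iUnion_of_subset _ subset_rfl)
  | @lolliL _ Δ₁ P Δ₂ N C _ _ ih₁ ih₂ =>
    intro hΓ
    calc v.semCtx (Δ₁ + Δ₂) + v.semN (.lolli P N)
        = v.semCtx Δ₂ + (v.semN (.lolli P N) + v.semCtx Δ₁) := by rw [semCtx_add]; abel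
      _ ⊆ v.semCtx Δ₂ + (v.semN (.lolli P N) + v.semP P) := by gcongr; exact ih₁ hΓ
      _ ⊆ v.semCtx Δ₂ + v.semN N := by gcongr; exact v.semN_lolli_add_subset P N
      _ ⊆ v.semN C := ih₂ hΓ
  | lolliR _ ih =>
    intro hΓ
    refine v.subset_semN_lolli_iff.2 ?_
    simpa [semJ, add_comm] using ih hΓ
  | tensorL _ ih =>
    intro hΓ
    simpa [semJ, semP, add_assoc] using ih hΓ
  | tensorR _ _ ih₁ ih₂ =>
    intro hΓ
    simpa [semJ, semP] using Set.add_subset_add (ih₁ hΓ) (ih₂ hΓ)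
  | bangL _ ih =>
    intro hΓ
    simp only [semJ, semCtx_cons, semP]
    rintro _ ⟨_, ⟨rfl, hN⟩, S, hS, rfl⟩
    simpa using ih (List.forall_mem_cons.2 ⟨hN, hΓ⟩) hS
  | bangR _ ih =>
    intro hΓ
    rintro _ rfl
    exact ⟨rfl, ih hΓ rfl⟩
  | copy hN _ ih =>
    intro hΓ
    calc v.semCtx _ = v.semCtx _ + 0 := (add_zero _).symm
      _ ⊆ _ := Set.add_subset_add_left (Set.singleton_subset_iff.2 (hΓ _ hN))
      _ ⊆ _ := ih hΓ
  | focusL _ ih =>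
    intro hΓ
    simpa [semJ, semP, add_comm] using ih hΓ
  | focusR _ ih => exact ih
  | blurL _ ih =>
    intro hΓ
    simpa [semJ, semN, add_comm] using ih hΓ
  | blurR _ ih => exact ih

end AtomInterp

def countermodel : AtomInterp ℕ∞ where
  neg
    | 0, _ => Set.univ
    | _, ts => {(ts.sum : ℕ∞)}
  pos _ _ := Set.univ

/-- The sequent `↓(∀x. ↑(↓A⁻ ⊗ ↓B⁻(x))) ⊢ ↑(↓A⁻ ⊗ ↓∀u. B⁻(u))` is not
derivable in LJF (with the nullary negative atom `A⁻ = natom 0 []` and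
the unary negative atom `B⁻ = natom 1`). -/
theorem stmt4 :
    ¬ LJF []
        {PosF.down (.all fun x =>
          .up (.tensor (.down (.natom 0 [])) (.down (.natom 1 [x]))))}
        (.inv (.up (.tensor (.down (.natom 0 []))
          (.down (.all fun u => .natom 1 [u]))))) := by
  intro h
  have hsound := countermodel.semJ_of_ljf h (by simp)
  have hyp_realized : ⊤ ∈ countermodel.semCtx {PosF.down (.all fun x =>
      .up (.tensor (.down (.natom 0 [])) (.down (.natom 1 [x]))))} := by
    simp [AtomInterp.semN, AtomInterp.semP, countermodel]
  obtain ⟨_, -, u, hu, -⟩ := hsound hyp_realized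
  have hu0 : u = 0 := by simpa [AtomInterp.semN, countermodel] using Set.mem_iInter.1 hu 0
  have hu1 : u = 1 := by simpa [AtomInterp.semN, countermodel] using Set.mem_iInter.1 hu 1
  exact zero_ne_one (hu0.symm.trans hu1)
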